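/- arXiv:1105.5686 — 2 statements merged into one kernel-verified Lean document; each statement's English description precedes it below -/
import Mathlib

section
/- Let n ≥ 2 be an integer, c < 0, and let α, β be real numbers with α ≤ 4/(3n) if n ∈ {2,3}, α ≤ 1/(n-1) if n ≥ 4, and α > 1/n; and β ≥ n/2 if n ∈ {2,3}, β ≥ 2 if n ≥ 4. Then for all real x, y ≥ 0 (representing |Å_H|² and |Å_I|²), the expression (6 - 2/(n(α-1/n)))·x·y + (3 - 2/(n(α-1/n)))·y² + (2β - 4n + 2β/(n(α-1/n)))·c·x + 4(β/(n(α-1/n)) - n)·c·y - 2β(β/(n(α-1/n)) - n)·c² is nonpositive. -/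
/-!
Write `d = 1 / (n (α - 1/n))`. The bounds on `α` give `d ≥ 3`, and `d ≥ n - 1` when `n ≥ 4`;
together with the bounds on `β` this yields `β d ≥ n` and `β (1 + d) ≥ 2n`. Since `c < 0` and
`x, y ≥ 0`, each of the five terms of the expression is then nonpositive on its own.
-/

lemma reaction_nonpos {N β c x y d : ℝ} (hc : c < 0) (hx : 0 ≤ x) (hy : 0 ≤ y)
    (hd : 3 ≤ d) (hβd : N ≤ β * d) (hβd' : 2 * N ≤ β * (1 + d)) (hβ : 0 ≤ β) :
    (6 - 2 * d) * x * y + (3 - 2 * d) * y ^ 2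
      + (2 * β - 4 * N + 2 * β * d) * c * x
      + 4 * (β * d - N) * c * y - 2 * β * (β * d - N) * c ^ 2 ≤ 0 := by
  have hxy : (6 - 2 * d) * x * y ≤ 0 :=
    mul_nonpos_of_nonpos_of_nonneg (mul_nonpos_of_nonpos_of_nonneg (by linarith) hx) hy
  have hyy : (3 - 2 * d) * y ^ 2 ≤ 0 := mul_nonpos_of_nonpos_of_nonneg (by linarith) (sq_nonneg y)
  have hcx : (2 * β - 4 * N + 2 * β * d) * c * x ≤ 0 :=
    mul_nonpos_of_nonpos_of_nonneg (mul_nonpos_of_nonneg_of_nonpos (by linarith) hc.le) hx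
  have hcy : 4 * (β * d - N) * c * y ≤ 0 :=
    mul_nonpos_of_nonpos_of_nonneg (mul_nonpos_of_nonneg_of_nonpos (by linarith) hc.le) hy
  have hcc : 0 ≤ 2 * β * (β * d - N) * c ^ 2 := by
    have : 0 ≤ β * d - N := by linarith
    positivity
  linarith

lemma le_one_div_mul_sub_inv {n α L : ℝ} (hn : 0 < n) (hL : 0 < L) (hαn : 1 / n < α)
    (hα : n * α ≤ 1 + 1 / L) : L ≤ 1 / (n * (α - 1 / n)) := by
  have hk : n * (α - 1 / n) = n * α - 1 := by field_simp
  have hpos : 0 < n * α - 1 := by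
    rw [div_lt_iff₀ hn] at hαn
    linarith
  rw [hk, le_one_div hL hpos]
  linarith

theorem stmt5 (n : ℕ) (hn : 2 ≤ n) (c α β : ℝ) (hc : c < 0)
    (hα23 : n = 2 ∨ n = 3 → α ≤ 4 / (3 * (n : ℝ)))
    (hα4 : 4 ≤ n → α ≤ 1 / ((n : ℝ) - 1))
    (hαn : 1 / (n : ℝ) < α)
    (hβ23 : n = 2 ∨ n = 3 → (n : ℝ) / 2 ≤ β)
    (hβ4 : 4 ≤ n → (2 : ℝ) ≤ β)
    (x y : ℝ) (hx : 0 ≤ x) (hy : 0 ≤ y) :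
    (6 - 2 / ((n : ℝ) * (α - 1 / (n : ℝ)))) * x * y
      + (3 - 2 / ((n : ℝ) * (α - 1 / (n : ℝ)))) * y ^ 2
      + (2 * β - 4 * (n : ℝ) + 2 * β / ((n : ℝ) * (α - 1 / (n : ℝ)))) * c * x
      + 4 * (β / ((n : ℝ) * (α - 1 / (n : ℝ))) - (n : ℝ)) * c * y
      - 2 * β * (β / ((n : ℝ) * (α - 1 / (n : ℝ))) - (n : ℝ)) * c ^ 2 ≤ 0 := by
  have hN : (2 : ℝ) ≤ n := by exact_mod_cast hn
  set d := 1 / ((n : ℝ) * (α - 1 / n))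
  obtain ⟨L, hL3, hLd, hβL, hβL'⟩ :
      ∃ L, 3 ≤ L ∧ L ≤ d ∧ (n : ℝ) ≤ β * L ∧ 2 * (n : ℝ) ≤ β * (1 + L) := by
    rcases le_or_gt 4 n with h4 | h4
    · have hN4 : (4 : ℝ) ≤ n := by exact_mod_cast h4
      have hα := hα4 h4
      have hβ := hβ4 h4
      have hα' : α * (n - 1) ≤ 1 := (le_div_iff₀ (by linarith)).mp hα
      exact ⟨n - 1, by linarith,
        le_one_div_mul_sub_inv (by linarith) (by linarith) hαn (by linarith),
        by nlinarith, by nlinarith⟩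
    · have h23 : n = 2 ∨ n = 3 := by omega
      have hN3 : (n : ℝ) ≤ 3 := by exact_mod_cast (by omega : n ≤ 3)
      have hα := hα23 h23
      have hβ := hβ23 h23
      rw [le_div_iff₀ (by linarith)] at hα
      exact ⟨3, le_rfl, le_one_div_mul_sub_inv (by linarith) (by norm_num) hαn (by linarith),
        by linarith, by linarith⟩
  have hβ : 0 ≤ β := by nlinarith
  have key := reaction_nonpos (N := n) hc hx hy (hL3.trans hLd)
    (hβL.trans (by gcongr)) (hβL'.trans (by gcongr)) hβ
  convert key using 1
  ring
end

section
/- Let n ≥ 2, c < 0, ε ∈ (0,1), and α_ε ≤ 4/(3n) (n ∈ {2,3}) or α_ε ≤ 1/(n-1) (n ≥ 4), β_ε ≥ n/2(1+ε) or 2(1+ε) respectively. If |A|² ≤ α_ε|H|² + β_ε c and |A|² ≥ |H|²/n, then (1/2)(1/(n-1) - α_ε)|H|² + (1/2)(2 - β_ε)c ≥ ε₀|H|² for some constant ε₀ > 0 depending only on n and ε — i.e. the sectional-curvature lower bound K_min ≥ (1/2)(1/(n-1) - α_ε)|H|² + (1/2)(2-β_ε)c is bounded below by ε₀|H|². -/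
/-!
Since `|A|² ≥ |H|²/n`, the pinching condition gives `β c ≥ (1/n - α) |H|²`, a lower bound
on the negative term `c` proportional to `|H|²`. When `β ≤ 2` this turns the curvature bound
into a multiple of `|H|²`; when `β ≥ 2` the `c`-term is already nonnegative. For the chosen
`α_ε, β_ε` the resulting coefficient is positive and depends only on `n` and `ε`.
-/

noncomputable def pinchingGap (n α β : ℝ) : ℝ :=
  (1 / (n - 1) - α + max (2 - β) 0 * (1 / n - α) / β) / 2

theorem pinchingGap_mul_le {n α β c h : ℝ} (hβ : 0 < β) (hc : c ≤ 0)
    (hpinch : h / n ≤ α * h + β * c) :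
    pinchingGap n α β * h ≤ (1 / 2) * (1 / (n - 1) - α) * h + (1 / 2) * (2 - β) * c := by
  have hc_lower : (1 / n - α) * h / β ≤ c := by
    rw [div_le_iff₀ hβ]
    linear_combination hpinch
  have hterm : max (2 - β) 0 * ((1 / n - α) * h / β) ≤ (2 - β) * c := by
    rcases le_total β 2 with hβ2 | hβ2
    · rw [max_eq_left (by linarith)]
      exact mul_le_mul_of_nonneg_left hc_lower (by linarith)
    · rw [max_eq_right (by linarith), zero_mul]
      exact mul_nonneg_of_nonpos_of_nonpos (by linarith) hc
  unfold pinchingGap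
  linear_combination hterm / 2

theorem pinchingGap_pos_of_two_le {n α β : ℝ} (hα : α < 1 / (n - 1)) (hβ : 2 ≤ β) :
    0 < pinchingGap n α β := by
  rw [pinchingGap, max_eq_right (by linarith), zero_mul, zero_div, add_zero]
  linarith

theorem pinchingGap_pos_of_le_four {n ε : ℝ} (hn1 : 1 < n) (hn4 : n ≤ 4) (hε : 0 < ε) :
    0 < pinchingGap n (4 / (3 * n + n * ε)) (n / 2 * (1 + ε)) := by
  have hn0 : 0 < n - 1 := by linarith
  have hα : 4 / (3 * n + n * ε) < 1 / (n - 1) := by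
    rw [div_lt_div_iff₀ (by positivity) hn0]
    nlinarith [mul_pos (by linarith : (0 : ℝ) < n) hε]
  rcases le_total (n / 2 * (1 + ε)) 2 with hβ | hβ
  · have hgap : pinchingGap n (4 / (3 * n + n * ε)) (n / 2 * (1 + ε)) =
        (4 - n + (8 * n - 4) * ε + n * ε ^ 2) / (2 * n ^ 2 * (n - 1) * (1 + ε) * (3 + ε)) := by
      rw [pinchingGap, max_eq_left (by linarith)]
      field_simp
      ring
    rw [hgap]
    apply div_pos
    · nlinarith [mul_pos (by linarith : (0 : ℝ) < 8 * n - 4) hε,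
        mul_pos (by linarith : (0 : ℝ) < n) (mul_pos hε hε)]
    · positivity
  · exact pinchingGap_pos_of_two_le hα hβ

theorem stmt19_general (n : ℕ) (hn : 2 ≤ n) (ε : ℝ) (hε0 : 0 < ε)
    (αε βε : ℝ)
    (h23 : n = 2 ∨ n = 3 →
      αε = 4 / (3 * (n : ℝ) + (n : ℝ) * ε) ∧ βε = ((n : ℝ) / 2) * (1 + ε))
    (h4 : 4 ≤ n → αε = 1 / ((n : ℝ) - 1 + ε) ∧ βε = 2 * (1 + ε)) :
    ∃ ε₀ > 0, ∀ c : ℝ, c < 0 → ∀ h A2 : ℝ, 0 ≤ h →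
      A2 ≤ αε * h + βε * c → h / (n : ℝ) ≤ A2 →
      (1 / 2) * (1 / ((n : ℝ) - 1) - αε) * h + (1 / 2) * (2 - βε) * c ≥ ε₀ * h := by
  have hn1 : (1 : ℝ) < n := by exact_mod_cast hn
  have hconst : 0 < βε ∧ 0 < pinchingGap n αε βε := by
    rcases Nat.lt_or_ge n 4 with hlt | hge
    · obtain ⟨rfl, rfl⟩ := h23 (by omega)
      exact ⟨by positivity, pinchingGap_pos_of_le_four hn1 (by exact_mod_cast hlt.le) hε0⟩
    · obtain ⟨rfl, rfl⟩ := h4 hge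
      refine ⟨by positivity, pinchingGap_pos_of_two_le ?_ (by linarith)⟩
      exact one_div_lt_one_div_of_lt (by linarith) (by linarith)
  exact ⟨_, hconst.2, fun c hc h A2 _ hA hH => pinchingGap_mul_le hconst.1 hc.le (hH.trans hA)⟩

theorem stmt19 (n : ℕ) (hn : 2 ≤ n) (ε : ℝ) (hε0 : 0 < ε) (hε1 : ε < 1)
    (αε βε : ℝ)
    (h23 : n = 2 ∨ n = 3 →
      αε = 4 / (3 * (n : ℝ) + (n : ℝ) * ε) ∧ βε = ((n : ℝ) / 2) * (1 + ε))
    (h4 : 4 ≤ n → αε = 1 / ((n : ℝ) - 1 + ε) ∧ βε = 2 * (1 + ε)) :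
    ∃ ε₀ > 0, ∀ c : ℝ, c < 0 → ∀ h A2 : ℝ, 0 ≤ h →
      A2 ≤ αε * h + βε * c → h / (n : ℝ) ≤ A2 →
      (1 / 2) * (1 / ((n : ℝ) - 1) - αε) * h + (1 / 2) * (2 - βε) * c ≥ ε₀ * h :=
  stmt19_general n hn ε hε0 αε βε h23 h4
end
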